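/- With the chain maps φ and ψ between the Koszul and bar resolutions of S_q(V) as specified, the maps ψ and φ are mutually compatible in low degrees: ψ_1(φ_1(1⊗1⊗v_i)) = 1⊗1⊗v_i for all i, and ψ_2(1⊗v_i⊗v_j⊗1 − q_{ij}⊗v_j⊗v_i⊗1) = 1⊗1⊗v_i∧v_j for all i < j; in particular ψ_2∘φ_2 is the identity on elements of the form 1⊗1⊗v_i∧v_j. Moreover ψ is a chain map in degrees ≤ 2 on the stated values: ψ_0δ_1 = d_1ψ_1 on elements 1⊗v_i⊗1 and 1⊗v_iv_j⊗1, and ψ_1δ_2 = d_2ψ_2 on elements 1⊗v_i⊗v_j⊗1. -/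

import Mathlib

open scoped BigOperators TensorProduct

noncomputable section

namespace QDOA19

/-- The relations `vᵢvⱼ = q_{ij} vⱼvᵢ` of the quantum symmetric algebra `S_q(V)`. -/
def relS (k : Type*) [Field k] (n : ℕ) (q : Fin n → Fin n → k) :
    FreeAlgebra k (Fin n) → FreeAlgebra k (Fin n) → Prop := fun a b =>
  ∃ i j : Fin n, a = FreeAlgebra.ι k i * FreeAlgebra.ι k j ∧
    b = q i j • (FreeAlgebra.ι k j * FreeAlgebra.ι k i)

/-- The quantum symmetric algebra `S = S_q(V)`. -/
def Sq (k : Type*) [Field k] (n : ℕ) (q : Fin n → Fin n → k) := RingQuot (relS k n q)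

instance (k : Type*) [Field k] (n : ℕ) (q : Fin n → Fin n → k) : Ring (Sq k n q) :=
  inferInstanceAs (Ring (RingQuot (relS k n q)))

instance (k : Type*) [Field k] (n : ℕ) (q : Fin n → Fin n → k) : Algebra k (Sq k n q) :=
  inferInstanceAs (Algebra k (RingQuot (relS k n q)))

/-- The image of the basis vector `vᵢ` in `S_q(V)`. -/
def vS (k : Type*) [Field k] (n : ℕ) (q : Fin n → Fin n → k) (i : Fin n) : Sq k n q :=
  RingQuot.mkAlgHom k (relS k n q) (FreeAlgebra.ι k i)

/-- The index set of the standard basis `{vᵢ ∧ vⱼ : i < j}` of `Λ²V`. -/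
def W2idx (n : ℕ) := {p : Fin n × Fin n // p.1 < p.2}

instance (n : ℕ) : Fintype (W2idx n) := by unfold W2idx; infer_instance
instance (n : ℕ) : DecidableEq (W2idx n) := by unfold W2idx; infer_instance

/-- `Λ¹V = V`, coordinatized by `Fin n → k`. -/
abbrev W1 (k : Type*) [Field k] (n : ℕ) := Fin n → k

/-- `Λ²V`, coordinatized by its standard basis `{vᵢ ∧ vⱼ : i < j}`. -/
abbrev W2 (k : Type*) [Field k] (n : ℕ) := W2idx n → k

/-- The degree-1 term `S^e ⊗ Λ¹V = S ⊗ S ⊗ V` of the Koszul resolution. -/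
abbrev K1 (k : Type*) [Field k] (n : ℕ) (q : Fin n → Fin n → k) :=
  (Sq k n q ⊗[k] Sq k n q) ⊗[k] W1 k n

/-- The degree-2 term `S^e ⊗ Λ²V` of the Koszul resolution. -/
abbrev K2 (k : Type*) [Field k] (n : ℕ) (q : Fin n → Fin n → k) :=
  (Sq k n q ⊗[k] Sq k n q) ⊗[k] W2 k n

/-- The element `vᵢ ∧ vⱼ ∈ Λ²V`, with the convention `vⱼ ∧ vᵢ = −q_{ji} vᵢ ∧ vⱼ`
for `i < j` (and `vᵢ ∧ vᵢ = 0`). -/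
def wedge (k : Type*) [Field k] (n : ℕ) (q : Fin n → Fin n → k) (i j : Fin n) : W2 k n :=
  if h : i < j then (Pi.single (⟨(i, j), h⟩ : W2idx n) 1 : W2 k n)
  else if h' : j < i then
    -(q i j) • (Pi.single (⟨(j, i), h'⟩ : W2idx n) 1 : W2 k n)
  else 0

/-- The Koszul differential `d₁ : S^e ⊗ Λ¹V → S^e`,
`d₁(a ⊗ b ⊗ vᵢ) = a vᵢ ⊗ b − a ⊗ vᵢ b`. -/
def d1 (k : Type*) [Field k] (n : ℕ) (q : Fin n → Fin n → k) :
    K1 k n q →ₗ[k] Sq k n q ⊗[k] Sq k n q :=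
  TensorProduct.lift (LinearMap.flip ((Pi.basisFun k (Fin n)).constr k (fun i =>
    TensorProduct.map (LinearMap.mulRight k (vS k n q i)) LinearMap.id
      - TensorProduct.map LinearMap.id (LinearMap.mulLeft k (vS k n q i)))))

/-- The Koszul differential `d₂ : S^e ⊗ Λ²V → S^e ⊗ Λ¹V`, evaluated on `1 ⊗ 1 ⊗ —`:
`d₂(1 ⊗ 1 ⊗ vᵢ∧vⱼ) = (vᵢ ⊗ 1 − q_{ij} ⊗ vᵢ) ⊗ vⱼ − (q_{ij} vⱼ ⊗ 1 − 1 ⊗ vⱼ) ⊗ vᵢ`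
for `i < j`. -/
def d2g (k : Type*) [Field k] (n : ℕ) (q : Fin n → Fin n → k) :
    W2 k n →ₗ[k] K1 k n q :=
  (Pi.basisFun k (W2idx n)).constr k (fun p =>
    ((vS k n q p.1.1 ⊗ₜ[k] (1 : Sq k n q))
        - q p.1.1 p.1.2 • ((1 : Sq k n q) ⊗ₜ[k] vS k n q p.1.1)) ⊗ₜ[k]
      (Pi.single p.1.2 1 : W1 k n)
    - (q p.1.1 p.1.2 • (vS k n q p.1.2 ⊗ₜ[k] (1 : Sq k n q))
        - (1 : Sq k n q) ⊗ₜ[k] vS k n q p.1.2) ⊗ₜ[k]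
      (Pi.single p.1.1 1 : W1 k n))

/-- Left `S^e`-action of `x ⊗ 1` on `S^e ⊗ Λ¹V` (left multiplication by `x` in the
first factor). -/
def lactK (k : Type*) [Field k] (n : ℕ) (q : Fin n → Fin n → k) (x : Sq k n q) :
    K1 k n q →ₗ[k] K1 k n q :=
  TensorProduct.map (TensorProduct.map (LinearMap.mulLeft k x) LinearMap.id) LinearMap.id

/-- Right `S^e`-action of `1 ⊗ y` on `S^e ⊗ Λ¹V` (right multiplication by `y` in the
second — opposite — factor). -/
def ractK (k : Type*) [Field k] (n : ℕ) (q : Fin n → Fin n → k) (y : Sq k n q) :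
    K1 k n q →ₗ[k] K1 k n q :=
  TensorProduct.map (TensorProduct.map LinearMap.id (LinearMap.mulRight k y)) LinearMap.id

/-- The value `ψ₁(1 ⊗ vᵢ ⊗ 1) = 1 ⊗ 1 ⊗ vᵢ`. -/
def psi1 (k : Type*) [Field k] (n : ℕ) (q : Fin n → Fin n → k) (i : Fin n) : K1 k n q :=
  ((1 : Sq k n q) ⊗ₜ[k] (1 : Sq k n q)) ⊗ₜ[k] (Pi.single i 1 : W1 k n)

/-- The value
`ψ₁(1 ⊗ vᵢvⱼ ⊗ 1) = ½(q_{ij} ⊗ vᵢ + vᵢ ⊗ 1) ⊗ vⱼ + ½(q_{ij} vⱼ ⊗ 1 + 1 ⊗ vⱼ) ⊗ vᵢ`. -/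
def psi1sq (k : Type*) [Field k] (n : ℕ) (q : Fin n → Fin n → k) (i j : Fin n) : K1 k n q :=
  (2⁻¹ : k) •
    ((q i j • ((1 : Sq k n q) ⊗ₜ[k] vS k n q i) + vS k n q i ⊗ₜ[k] (1 : Sq k n q)) ⊗ₜ[k]
        (Pi.single j 1 : W1 k n)
      + (q i j • (vS k n q j ⊗ₜ[k] (1 : Sq k n q)) + (1 : Sq k n q) ⊗ₜ[k] vS k n q j) ⊗ₜ[k]
        (Pi.single i 1 : W1 k n))

/-- The value `ψ₂(1 ⊗ vᵢ ⊗ vⱼ ⊗ 1) = ½ ⊗ 1 ⊗ vᵢ∧vⱼ` (zero for `i = j`). -/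
def psi2 (k : Type*) [Field k] (n : ℕ) (q : Fin n → Fin n → k) (i j : Fin n) : K2 k n q :=
  (2⁻¹ : k) • (((1 : Sq k n q) ⊗ₜ[k] (1 : Sq k n q)) ⊗ₜ[k] wedge k n q i j)

lemma vcomm (k : Type*) [Field k] (n : ℕ) (q : Fin n → Fin n → k) (i j : Fin n) :
    vS k n q i * vS k n q j = q i j • (vS k n q j * vS k n q i) := by
  have h := RingQuot.mkAlgHom_rel (s := relS k n q) k
    (⟨i, j, rfl, rfl⟩ : relS k n q (FreeAlgebra.ι k i * FreeAlgebra.ι k j)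
      (q i j • (FreeAlgebra.ι k j * FreeAlgebra.ι k i)))
  simp only [map_mul, map_smul] at h
  exact h

lemma d1_tmul (k : Type*) [Field k] (n : ℕ) (q : Fin n → Fin n → k)
    (a b : Sq k n q) (i : Fin n) :
    d1 k n q ((a ⊗ₜ[k] b) ⊗ₜ[k] (Pi.single i 1 : W1 k n))
      = (a * vS k n q i) ⊗ₜ[k] b - a ⊗ₜ[k] (vS k n q i * b) := by
  have : (Pi.single i 1 : W1 k n) = (Pi.basisFun k (Fin n)) i :=
    (Pi.basisFun_apply k (Fin n) i).symm
  rw [d1, this, TensorProduct.lift.tmul, LinearMap.flip_apply, Module.Basis.constr_basis]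
  simp [TensorProduct.map_tmul, LinearMap.mulRight_apply, LinearMap.mulLeft_apply]

lemma d2g_single (k : Type*) [Field k] (n : ℕ) (q : Fin n → Fin n → k) (p : W2idx n) :
    d2g k n q (Pi.single p 1 : W2 k n)
      = ((vS k n q p.1.1 ⊗ₜ[k] (1 : Sq k n q))
          - q p.1.1 p.1.2 • ((1 : Sq k n q) ⊗ₜ[k] vS k n q p.1.1)) ⊗ₜ[k]
        (Pi.single p.1.2 1 : W1 k n)
      - (q p.1.1 p.1.2 • (vS k n q p.1.2 ⊗ₜ[k] (1 : Sq k n q))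
          - (1 : Sq k n q) ⊗ₜ[k] vS k n q p.1.2) ⊗ₜ[k]
        (Pi.single p.1.1 1 : W1 k n) := by
  have : (Pi.single p 1 : W2 k n) = (Pi.basisFun k (W2idx n)) p :=
    (Pi.basisFun_apply k (W2idx n) p).symm
  rw [d2g, this, Module.Basis.constr_basis]

/-- With the chain maps `φ` (from the Koszul to the bar
resolution of `S_q(V)`) and `ψ` (in the other direction, with the stated
low-degree values) one has:

* `ψ₁(φ₁(1⊗1⊗vᵢ)) = 1⊗1⊗vᵢ`  (note `φ₁(1⊗1⊗vᵢ) = 1⊗vᵢ⊗1`);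
* `ψ₂(1⊗vᵢ⊗vⱼ⊗1 − q_{ij} ⊗vⱼ⊗vᵢ⊗1) = 1⊗1⊗(vᵢ∧vⱼ)` for `i < j`, so `ψ₂ ∘ φ₂ = id`
  on elements `1⊗1⊗vᵢ∧vⱼ`;
* `ψ₀δ₁ = d₁ψ₁` on the elements `1⊗vᵢ⊗1` (where `δ₁(1⊗vᵢ⊗1) = vᵢ⊗1 − 1⊗vᵢ`)
  and `1⊗vᵢvⱼ⊗1` (where `δ₁(1⊗vᵢvⱼ⊗1) = vᵢvⱼ⊗1 − 1⊗vᵢvⱼ`);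
* `ψ₁δ₂ = d₂ψ₂` on the elements `1⊗vᵢ⊗vⱼ⊗1` (where
  `δ₂(1⊗vᵢ⊗vⱼ⊗1) = vᵢ⊗vⱼ⊗1 − 1⊗vᵢvⱼ⊗1 + 1⊗vᵢ⊗vⱼ`, and `ψ₁` is applied
  `S^e`-linearly: `ψ₁(vᵢ⊗vⱼ⊗1) = (vᵢ⊗1)·ψ₁(1⊗vⱼ⊗1)`,
  `ψ₁(1⊗vᵢ⊗vⱼ) = (1⊗vⱼ)·ψ₁(1⊗vᵢ⊗1)`; and
  `d₂ψ₂(1⊗vᵢ⊗vⱼ⊗1) = ½ d₂(1⊗1⊗vᵢ∧vⱼ)` by `S^e`-linearity of `d₂`). -/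
theorem chain_map_compatibilities
    (k : Type*) [Field k] [CharZero k] (n : ℕ) (q : Fin n → Fin n → k)
    (hq_diag : ∀ i, q i i = 1)
    (hq_inv : ∀ i j, q i j * q j i = 1) :
    (∀ i : Fin n, psi1 k n q i
      = ((1 : Sq k n q) ⊗ₜ[k] (1 : Sq k n q)) ⊗ₜ[k] (Pi.single i 1 : W1 k n)) ∧
    (∀ i j : Fin n, i < j →
      psi2 k n q i j - q i j • psi2 k n q j i
        = ((1 : Sq k n q) ⊗ₜ[k] (1 : Sq k n q)) ⊗ₜ[k] wedge k n q i j) ∧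
    (∀ i : Fin n, d1 k n q (psi1 k n q i)
      = vS k n q i ⊗ₜ[k] (1 : Sq k n q) - (1 : Sq k n q) ⊗ₜ[k] vS k n q i) ∧
    (∀ i j : Fin n, d1 k n q (psi1sq k n q i j)
      = (vS k n q i * vS k n q j) ⊗ₜ[k] (1 : Sq k n q)
        - (1 : Sq k n q) ⊗ₜ[k] (vS k n q i * vS k n q j)) ∧
    (∀ i j : Fin n,
      lactK k n q (vS k n q i) (psi1 k n q j) - psi1sq k n q i j
          + ractK k n q (vS k n q j) (psi1 k n q i)
        = (2⁻¹ : k) • d2g k n q (wedge k n q i j)) := by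
  refine ⟨fun i => rfl, ?_, ?_, ?_, ?_⟩
  · intro i j hij
    have hji : ¬ j < i := not_lt.mpr hij.le
    rw [psi2, psi2, wedge, wedge, dif_pos hij, dif_neg hji, dif_pos hij]
    simp only [TensorProduct.tmul_smul, smul_smul]
    match_scalars
    linear_combination (2⁻¹ : k) * hq_inv i j
  · intro i
    rw [psi1, d1_tmul]
    simp
  · intro i j
    simp only [psi1sq, TensorProduct.add_tmul, ← TensorProduct.smul_tmul',
      TensorProduct.tmul_smul, map_smul, map_add, d1_tmul]
    simp only [one_mul, mul_one]
    simp only [vcomm k n q i j]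
    simp only [← TensorProduct.smul_tmul', TensorProduct.tmul_smul]
    match_scalars <;> field_simp <;> ring
  · intro i j
    rcases lt_trichotomy i j with hij | rfl | hji
    · rw [wedge, dif_pos hij]
      erw [d2g_single]
      simp only [lactK, ractK, psi1, psi1sq, TensorProduct.map_tmul, LinearMap.mulLeft_apply,
        LinearMap.mulRight_apply, LinearMap.id_coe, id_eq, mul_one, one_mul]
      simp only [TensorProduct.sub_tmul, TensorProduct.add_tmul, ← TensorProduct.smul_tmul',
        TensorProduct.tmul_smul, smul_sub, smul_add, smul_smul]
      module
    · rw [wedge]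
      have hii : ¬ i < i := lt_irrefl i
      rw [dif_neg hii, dif_neg hii, (d2g k n q).map_zero, smul_zero]
      simp only [lactK, ractK, psi1, psi1sq, TensorProduct.map_tmul, LinearMap.mulLeft_apply,
        LinearMap.mulRight_apply, LinearMap.id_coe, id_eq, mul_one, one_mul, hq_diag, one_smul]
      simp only [TensorProduct.add_tmul, ← TensorProduct.smul_tmul', TensorProduct.tmul_smul]
      match_scalars <;> norm_num
    · have hij : ¬ i < j := not_lt.mpr hji.le
      rw [wedge, dif_neg hij, dif_pos hji, map_smul]
      erw [d2g_single]
      simp only [lactK, ractK, psi1, psi1sq, TensorProduct.map_tmul, LinearMap.mulLeft_apply,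
        LinearMap.mulRight_apply, LinearMap.id_coe, id_eq, mul_one, one_mul]
      simp only [TensorProduct.sub_tmul, TensorProduct.add_tmul, ← TensorProduct.smul_tmul',
        TensorProduct.tmul_smul, smul_sub, smul_add, smul_smul, smul_neg, neg_smul]
      have hq1 := hq_inv i j
      match_scalars <;> field_simp <;> linear_combination -hq1

end QDOA19
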